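/- Let c be a vertex of degree k in a graph G that is contained in a big k-clique C, and suppose c has exactly one neighbour d outside C, where d is not adjacent to any other vertex of C. Then the graph (G − E(C − c))/cd, obtained from G by deleting all edges between vertices of C − {c} and then contracting the edge cd, is a vertex-minor of G. -/

import Mathlib

open SimpleGraph

/-! ### Basic operations: local complementation, pivoting, vertex-minors -/

/-- Local complementation at a vertex `v`: the adjacency between each pair of
neighbours of `v` is toggled. -/
def localComp {V : Type*} (G : SimpleGraph V) (v : V) : SimpleGraph V where
  Adj a b := (G.Adj a b ∧ ¬(G.Adj v a ∧ G.Adj v b)) ∨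
    (a ≠ b ∧ ¬ G.Adj a b ∧ G.Adj v a ∧ G.Adj v b)
  symm := by
    constructor
    rintro a b (⟨h1, h2⟩ | ⟨h1, h2, h3, h4⟩)
    · exact Or.inl ⟨h1.symm, fun hc => h2 ⟨hc.2, hc.1⟩⟩
    · exact Or.inr ⟨h1.symm, fun hc => h2 hc.symm, h4, h3⟩
  loopless := by
    constructor
    rintro a (⟨h1, _⟩ | ⟨h1, _⟩)
    · exact G.loopless.irrefl a h1
    · exact h1 rfl

/-- Pivoting an edge `uv`: `G ∧ uv = G * u * v * u`. -/
def pivotG {V : Type*} (G : SimpleGraph V) (u v : V) : SimpleGraph V :=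
  localComp (localComp (localComp G u) v) u

/-- Finite simple graphs, concretely represented on `Fin n`. -/
abbrev FinGraph := Σ n : ℕ, SimpleGraph (Fin n)

/-- One step in the construction of a vertex-minor: pass to an isomorphic copy,
perform a local complementation, or delete a vertex. -/
def VMStep (G H : FinGraph) : Prop :=
  Nonempty (G.2 ≃g H.2) ∨
  (∃ v : Fin G.1, Nonempty ((localComp G.2 v) ≃g H.2)) ∨
  (∃ v : Fin G.1, Nonempty ((G.2.induce {u | u ≠ v}) ≃g H.2))

/-- One step in the construction of a pivot-minor: pass to an isomorphic copy,
pivot an edge, or delete a vertex. -/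
def PMStep (G H : FinGraph) : Prop :=
  Nonempty (G.2 ≃g H.2) ∨
  (∃ u v : Fin G.1, G.2.Adj u v ∧ Nonempty ((pivotG G.2 u v) ≃g H.2)) ∨
  (∃ v : Fin G.1, Nonempty ((G.2.induce {u | u ≠ v}) ≃g H.2))

/-- `H` is a vertex-minor of `G` (both given concretely on `Fin _`). -/
def IsVertexMinorFG (H G : FinGraph) : Prop := Relation.ReflTransGen VMStep G H

/-- `H` is a pivot-minor of `G` (both given concretely on `Fin _`). -/
def IsPivotMinorFG (H G : FinGraph) : Prop := Relation.ReflTransGen PMStep G H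

/-- A finite graph represented concretely on `Fin (Nat.card V)`. -/
noncomputable def toFinGraph {V : Type*} [Finite V] (G : SimpleGraph V) : FinGraph :=
  ⟨Nat.card V, G.comap (Finite.equivFin V).symm⟩

/-- `H` is a vertex-minor of `G`. -/
def HasVertexMinor {V W : Type*} [Finite V] [Finite W]
    (G : SimpleGraph V) (H : SimpleGraph W) : Prop :=
  IsVertexMinorFG (toFinGraph H) (toFinGraph G)

/-- `H` is a pivot-minor of `G`. -/
def HasPivotMinor {V W : Type*} [Finite V] [Finite W]
    (G : SimpleGraph V) (H : SimpleGraph W) : Prop :=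
  IsPivotMinorFG (toFinGraph H) (toFinGraph G)

/-- A class of finite graphs closed under isomorphism, local complementation and
vertex deletion. -/
def VertexMinorClosed (𝒢 : Set FinGraph) : Prop :=
  (∀ G ∈ 𝒢, ∀ H : FinGraph, Nonempty (G.2 ≃g H.2) → H ∈ 𝒢) ∧
  (∀ G ∈ 𝒢, ∀ v : Fin G.1, (⟨G.1, localComp G.2 v⟩ : FinGraph) ∈ 𝒢) ∧
  (∀ G ∈ 𝒢, ∀ v : Fin G.1, toFinGraph (G.2.induce {u | u ≠ v}) ∈ 𝒢)

/-- A class of finite graphs closed under isomorphism, pivoting and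
vertex deletion. -/
def PivotMinorClosed (𝒢 : Set FinGraph) : Prop :=
  (∀ G ∈ 𝒢, ∀ H : FinGraph, Nonempty (G.2 ≃g H.2) → H ∈ 𝒢) ∧
  (∀ G ∈ 𝒢, ∀ u v : Fin G.1, G.2.Adj u v → (⟨G.1, pivotG G.2 u v⟩ : FinGraph) ∈ 𝒢) ∧
  (∀ G ∈ 𝒢, ∀ v : Fin G.1, toFinGraph (G.2.induce {u | u ≠ v}) ∈ 𝒢)

/-! ### Chromatic data -/

/-- The chromatic number, as a natural number (graphs here are finite). -/
noncomputable def chi {V : Type*} (G : SimpleGraph V) : ℕ := G.chromaticNumber.toNat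

/-- The ball of radius `ρ` around `v`: all vertices at distance at most `ρ` from `v`. -/
def ballSet {V : Type*} (G : SimpleGraph V) (v : V) (ρ : ℕ) : Set V :=
  {u | ∃ p : G.Walk v u, p.length ≤ ρ}

/-- `χ^{(ρ)}(G)`: the largest chromatic number of a `ρ`-ball of `G`. -/
noncomputable def chiBall {V : Type*} (G : SimpleGraph V) (ρ : ℕ) : ℕ :=
  ⨆ v : V, chi (G.induce (ballSet G v ρ))

/-- The distance from `u` to `v` is at least `n` (in particular, this holds
vacuously for unreachable pairs). -/
def distGE {V : Type*} (G : SimpleGraph V) (u v : V) (n : ℕ) : Prop :=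
  ∀ p : G.Walk u v, n ≤ p.length

/-- A stable (independent) set of vertices. -/
def IsStableSet {V : Type*} (G : SimpleGraph V) (A : Set V) : Prop :=
  ∀ a ∈ A, ∀ b ∈ A, ¬ G.Adj a b

/-- `A` covers `B`: every vertex of `B` has a neighbour in `A`. -/
def Covers {V : Type*} (G : SimpleGraph V) (A B : Set V) : Prop :=
  ∀ b ∈ B, ∃ a ∈ A, G.Adj a b

/-- `A` and `B` are anti-complete: there are no edges between them. -/
def AntiComplete {V : Type*} (G : SimpleGraph V) (A B : Set V) : Prop :=
  ∀ a ∈ A, ∀ b ∈ B, ¬ G.Adj a b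

/-- An induced path of `G`, given as a walk: it is a path, and the only edges of `G`
between its vertices are the edges of the path. -/
def IsInducedPath {V : Type*} (G : SimpleGraph V) {a b : V} (p : G.Walk a b) : Prop :=
  p.IsPath ∧ ∀ x ∈ p.support, ∀ y ∈ p.support, G.Adj x y → p.toSubgraph.Adj x y
/-! ### Big cliques and bloated trees -/

/-- A big clique: a maximal clique (w.r.t. vertex inclusion) of size at least 3. -/
def IsBigClique {V : Type*} (G : SimpleGraph V) (s : Finset V) : Prop :=
  G.IsClique ↑s ∧ 3 ≤ s.card ∧ ∀ t : Finset V, G.IsClique ↑t → s ⊆ t → t = s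

/-- Two vertices are related when they lie in a common big clique. -/
def bigCliqueRel {V : Type*} (G : SimpleGraph V) (u v : V) : Prop :=
  u = v ∨ ∃ s : Finset V, IsBigClique G s ∧ u ∈ s ∧ v ∈ s

/-- The graph obtained by contracting every big clique to a single vertex. -/
def contractBigCliques {V : Type*} (G : SimpleGraph V) :
    SimpleGraph (Quot (bigCliqueRel G)) where
  Adj a b := a ≠ b ∧ ∃ u v, G.Adj u v ∧ Quot.mk _ u = a ∧ Quot.mk _ v = b
  symm := by
    constructor
    rintro a b ⟨hne, u, v, h, hu, hv⟩
    exact ⟨hne.symm, v, u, h.symm, hv, hu⟩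
  loopless := ⟨fun a h => h.1 rfl⟩

/-- A bloated tree: every edge is in at most one big clique, vertices of a big
`k`-clique have degree at most `k`, and contracting all big cliques yields a tree. -/
def IsBloatedTree {V : Type*} (T : SimpleGraph V) : Prop :=
  (∀ u v, T.Adj u v → ∀ s t : Finset V, IsBigClique T s → IsBigClique T t →
    u ∈ s → v ∈ s → u ∈ t → v ∈ t → s = t) ∧
  (∀ s : Finset V, IsBigClique T s → ∀ v ∈ s, (T.neighborSet v).ncard ≤ s.card) ∧
  (contractBigCliques T).IsTree

/-- A leaf: a vertex of degree at most 1. -/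
def IsLeaf {V : Type*} (G : SimpleGraph V) (v : V) : Prop :=
  (G.neighborSet v).ncard ≤ 1

/-- A branching vertex of a bloated tree: a vertex of degree at least 3 that is
not contained in a triangle. -/
def IsBranching {V : Type*} (G : SimpleGraph V) (v : V) : Prop :=
  3 ≤ (G.neighborSet v).ncard ∧ ¬ ∃ a b, G.Adj v a ∧ G.Adj v b ∧ G.Adj a b

/-! ### Dangling paths and contractions -/

/-- The path `p` dangles from `X`: the set of vertices outside `p` with a
neighbour on `p` is exactly `X`. -/
def DanglesFrom {V : Type*} (G : SimpleGraph V) {a b : V} (p : G.Walk a b)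
    (X : Set V) : Prop :=
  {v | v ∉ p.support ∧ ∃ u ∈ p.support, G.Adj v u} = X

/-- The path `p` dangles oddly from `X`: moreover every vertex of `X` has an odd
number of neighbours on `p`. -/
def DanglesOddly {V : Type*} (G : SimpleGraph V) {a b : V} (p : G.Walk a b)
    (X : Set V) : Prop :=
  DanglesFrom G p X ∧ ∀ x ∈ X, Odd ({u | u ∈ p.support ∧ G.Adj x u}.ncard)

/-- Contract the set `S` to the single vertex `a₀` (for `a₀ ∈ S` with `G[S]`
connected this is contraction of all edges inside `S`). -/
def contractSet {V : Type*} (G : SimpleGraph V) (S : Set V) (a₀ : V) :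
    SimpleGraph {w : V // w ∉ S ∨ w = a₀} where
  Adj u v := u ≠ v ∧
    ((u.1 ∉ S ∧ v.1 ∉ S ∧ G.Adj u.1 v.1) ∨
     (u.1 = a₀ ∧ v.1 ∉ S ∧ ∃ s ∈ S, G.Adj s v.1) ∨
     (v.1 = a₀ ∧ u.1 ∉ S ∧ ∃ s ∈ S, G.Adj u.1 s))
  symm := by
    constructor
    rintro u v ⟨hne, h⟩
    refine ⟨hne.symm, ?_⟩
    rcases h with ⟨h1, h2, h3⟩ | ⟨h1, h2, s, hs, hadj⟩ | ⟨h1, h2, s, hs, hadj⟩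
    · exact Or.inl ⟨h2, h1, h3.symm⟩
    · exact Or.inr (Or.inr ⟨h1, h2, s, hs, hadj.symm⟩)
    · exact Or.inr (Or.inl ⟨h1, h2, s, hs, hadj.symm⟩)
  loopless := ⟨fun u h => h.1 rfl⟩

/-! ### Ramsey numbers -/

/-- Every graph on `Fin N` contains a clique of size `n` or a stable set of size `m`. -/
def RamseyProp (N n m : ℕ) : Prop :=
  ∀ G : SimpleGraph (Fin N),
    (∃ s : Finset (Fin N), G.IsNClique n s) ∨ (∃ s : Finset (Fin N), Gᶜ.IsNClique m s)

/-- The Ramsey number `R(n,m)`: the least `N` such that every graph on at least `N`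
vertices contains a clique of size `n` or a stable set of size `m`. -/
noncomputable def ramsey (n m : ℕ) : ℕ := sInf {N | ∀ M, N ≤ M → RamseyProp M n m}

/-! ### Subdivided complete bipartite graphs and interfered versions -/

/-- The vertex set of (an interfered) `K¹_{n,m}`: the `x_i`, the `y_j`, and the
subdivision vertices `z_{i,j}`. -/
abbrev IVert (n m : ℕ) := Fin n ⊕ Fin m ⊕ Fin n × Fin m

/-- `K¹_{n,m}`: the complete bipartite graph `K_{n,m}` with every edge subdivided
exactly once. -/
def KOneBip (n m : ℕ) : SimpleGraph (IVert n m) :=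
  SimpleGraph.fromRel (fun a b => ∃ i j,
    (a = Sum.inl i ∧ b = Sum.inr (Sum.inr (i, j))) ∨
    (a = Sum.inr (Sum.inl j) ∧ b = Sum.inr (Sum.inr (i, j))))

/-- The pairs that may be adjacent in an interfered `K¹_{n,m}`. -/
def InterferedAllowed (n m : ℕ) (a b : IVert n m) : Prop :=
  (∃ i j, a = Sum.inl i ∧ b = Sum.inr (Sum.inr (i, j))) ∨
  (∃ i j, a = Sum.inr (Sum.inl j) ∧ b = Sum.inr (Sum.inr (i, j))) ∨
  (∃ (k i : Fin n) (j : Fin m), k < i ∧ a = Sum.inl k ∧ b = Sum.inr (Sum.inr (i, j)))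

/-- An interfered `K¹_{n,m}`: all edges `x_i z_{i,j}` and `z_{i,j} y_j` are present,
and all other edges are of the form `x_k z_{i,j}` with `k < i`. -/
def IsInterfered (n m : ℕ) (G : SimpleGraph (IVert n m)) : Prop :=
  (∀ i j, G.Adj (Sum.inl i) (Sum.inr (Sum.inr (i, j)))) ∧
  (∀ i j, G.Adj (Sum.inr (Sum.inl j)) (Sum.inr (Sum.inr (i, j)))) ∧
  (∀ a b, G.Adj a b → InterferedAllowed n m a b ∨ InterferedAllowed n m b a)
/-! ### Long covers -/

/-- A long cover `(L⁰, L¹, L², L³)` of a set `C`. -/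
def IsLongCover {V : Type*} (G : SimpleGraph V) (L : Fin 4 → Set V) (C : Set V) : Prop :=
  (∀ i j : Fin 4, i ≠ j → Disjoint (L i) (L j)) ∧
  (∀ i : Fin 4, Disjoint (L i) C) ∧
  (G.induce (L 0)).Connected ∧
  Covers G (L 0) (L 1) ∧ Covers G (L 1) (L 2) ∧ Covers G (L 2) (L 3) ∧
  Covers G (L 3) C ∧
  AntiComplete G C (L 0) ∧ AntiComplete G C (L 1) ∧ AntiComplete G C (L 2) ∧
  AntiComplete G (L 0) (L 2) ∧ AntiComplete G (L 0) (L 3) ∧ AntiComplete G (L 1) (L 3)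

/-- A long `q`-cover of a set `C`. -/
def IsLongQCover {V : Type*} (G : SimpleGraph V) {q : ℕ}
    (ℒ : Fin q → Fin 4 → Set V) (C : Set V) : Prop :=
  (∀ i, IsLongCover G (ℒ i) C) ∧
  (∀ i j, i ≠ j →
    Disjoint (ℒ i 0 ∪ ℒ i 1 ∪ ℒ i 2 ∪ ℒ i 3) (ℒ j 0 ∪ ℒ j 1 ∪ ℒ j 2 ∪ ℒ j 3)) ∧
  (∀ i j, i < j →
    AntiComplete G (ℒ j 0 ∪ ℒ j 1 ∪ ℒ j 2) (ℒ i 0 ∪ ℒ i 1 ∪ ℒ i 2 ∪ ℒ i 3))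

/-! ### Multicovers -/

/-- A multicover `(N_x : x ∈ X)` of a set `C`, where `X` is presented as an
injective tuple `x : Fin m → V` (whose ordering is the total order on `X`). -/
def IsMulticover {V : Type*} (G : SimpleGraph V) {m : ℕ}
    (x : Fin m → V) (N : Fin m → Set V) (C : Set V) : Prop :=
  Function.Injective x ∧
  (∀ i, N i ⊆ G.neighborSet (x i)) ∧
  (∀ i, x i ∉ C) ∧
  (∀ i j, x i ∉ N j) ∧
  (∀ i, Disjoint (N i) C) ∧
  (∀ i j, i ≠ j → Disjoint (N i) (N j)) ∧
  (∀ i j, ¬ G.Adj (x i) (x j)) ∧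
  (∀ i, ∀ u ∈ C, ¬ G.Adj (x i) u) ∧
  (∀ i, ∀ u ∈ C, ∃ w ∈ N i, G.Adj w u) ∧
  (∀ i j, i < j → ∀ u ∈ N i, ¬ G.Adj (x j) u)

/-- A pure multicover: no `x ∈ X` has a neighbour in `N_y` for `y ≠ x`. -/
def IsPureMC {V : Type*} (G : SimpleGraph V) {m : ℕ}
    (x : Fin m → V) (N : Fin m → Set V) : Prop :=
  ∀ i j, i ≠ j → ∀ u ∈ N i, ¬ G.Adj (x j) u

/-- An impure multicover: for `x ≺ y`, `x` is complete to `N_y`. -/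
def IsImpureMC {V : Type*} (G : SimpleGraph V) {m : ℕ}
    (x : Fin m → V) (N : Fin m → Set V) : Prop :=
  ∀ i j, i < j → ∀ u ∈ N j, G.Adj (x i) u

/-!
The degree condition forces `N(c) = (C - c) ∪ {d}`. Local complementation at `c` toggles
exactly the pairs inside `N(c)`: it deletes all edges of the clique `C - c` and joins `d` to
every vertex of `C - c`, to none of which `d` was adjacent. Hence in `(G * c) - c` the
neighbourhood of `d` is `(N(d) - c) ∪ (C - c)`, the neighbourhood of the vertex obtained by
contracting `cd` in `G - E(C - c)`, while all other adjacencies agree with `G - E(C - c)`.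
So `(G - E(C - c))/cd ≅ (G * c) - c`.
-/

section LocalComplementation

variable {V W : Type*} {G : SimpleGraph V} {H : SimpleGraph W}

lemma localComp_adj_of_not_adj_left {v a : V} (ha : ¬ G.Adj v a) (b : V) :
    (localComp G v).Adj a b ↔ G.Adj a b := by
  simp [localComp, ha]

lemma localComp_adj_of_adj_of_adj {v a b : V} (ha : G.Adj v a) (hb : G.Adj v b) :
    (localComp G v).Adj a b ↔ a ≠ b ∧ ¬ G.Adj a b := by
  simp [localComp, ha, hb]

def SimpleGraph.Iso.localComp (φ : G ≃g H) (v : V) : localComp G v ≃g localComp H (φ v) where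
  toEquiv := φ.toEquiv
  map_rel_iff' := by simp [_root_.localComp, φ.map_adj_iff]

def SimpleGraph.Iso.induceNe (φ : G ≃g H) (v : V) :
    G.induce {u | u ≠ v} ≃g H.induce {u | u ≠ φ v} :=
  φ.induce (φ.toEquiv.bijOn fun u => by simp)

end LocalComplementation

section VertexMinor

variable {V W X : Type*} [Finite V] [Finite W] [Finite X]

noncomputable def isoToFinGraph (G : SimpleGraph V) : G ≃g (toFinGraph G).2 :=
  (Iso.comap (Finite.equivFin V).symm G).symm

lemma HasVertexMinor.trans {G : SimpleGraph V} {H : SimpleGraph W} {K : SimpleGraph X}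
    (hGH : HasVertexMinor G H) (hHK : HasVertexMinor H K) : HasVertexMinor G K :=
  Relation.ReflTransGen.trans hGH hHK

lemma hasVertexMinor_of_iso {G : SimpleGraph V} {H : SimpleGraph W} (φ : G ≃g H) :
    HasVertexMinor G H :=
  .single <| .inl ⟨(isoToFinGraph G).symm.trans (φ.trans (isoToFinGraph H))⟩

lemma hasVertexMinor_localComp (G : SimpleGraph V) (v : V) :
    HasVertexMinor G (localComp G v) :=
  .single <| .inr <| .inl
    ⟨isoToFinGraph G v, ⟨((isoToFinGraph G).localComp v).symm.trans (isoToFinGraph _)⟩⟩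

lemma hasVertexMinor_induce_ne (G : SimpleGraph V) (v : V) :
    HasVertexMinor G (G.induce {u | u ≠ v}) :=
  .single <| .inr <| .inr
    ⟨isoToFinGraph G v, ⟨((isoToFinGraph G).induceNe v).symm.trans (isoToFinGraph _)⟩⟩

end VertexMinor

section Contraction

variable {V : Type*} {G : SimpleGraph V} {S : Set V} {a₀ : V}

lemma contractSet_adj_of_notMem (ha₀ : a₀ ∈ S) {u v : {w : V // w ∉ S ∨ w = a₀}}
    (hu : u.1 ∉ S) (hv : v.1 ∉ S) : (contractSet G S a₀).Adj u v ↔ G.Adj u.1 v.1 := by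
  refine ⟨?_, fun h => ⟨fun huv => h.ne (congrArg Subtype.val huv), .inl ⟨hu, hv, h⟩⟩⟩
  rintro ⟨-, ⟨-, -, h⟩ | ⟨h, -⟩ | ⟨h, -⟩⟩
  exacts [h, absurd (h.symm ▸ ha₀) hu, absurd (h.symm ▸ ha₀) hv]

lemma contractSet_adj_contracted_left (ha₀ : a₀ ∈ S) {v : {w : V // w ∉ S ∨ w = a₀}}
    (hv : v.1 ∉ S) :
    (contractSet G S a₀).Adj ⟨a₀, .inr rfl⟩ v ↔ ∃ s ∈ S, G.Adj s v.1 := by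
  refine ⟨?_, fun h => ⟨fun huv => hv (huv ▸ ha₀), .inr (.inl ⟨rfl, hv, h⟩)⟩⟩
  rintro ⟨-, ⟨h, -⟩ | ⟨-, -, h⟩ | ⟨-, h, -⟩⟩
  exacts [absurd ha₀ h, h, absurd ha₀ h]

end Contraction

section ContractPairEquiv

variable {V : Type*} [DecidableEq V] {c d : V} (hcd : c ≠ d)

-- `d ↦ c`: in `G * c - c` the vertex `d` plays the role of the vertex that `cd` contracts to.
def contractPairEquiv :
    {u : V // u ≠ c} ≃ {w : V // w ∉ ({c, d} : Set V) ∨ w = c} :=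
  (Equiv.swap c d).subtypeEquiv fun u => by
    by_cases huc : u = c
    · simp [huc, hcd.symm]
    by_cases hud : u = d
    · simp [hud, hcd.symm]
    simp [Equiv.swap_apply_of_ne_of_ne huc hud, huc, hud]

lemma contractPairEquiv_apply_of_eq {u : {u : V // u ≠ c}} (hu : u.1 = d) :
    contractPairEquiv hcd u = ⟨c, .inr rfl⟩ := by
  simp [contractPairEquiv, hu]

lemma contractPairEquiv_apply_val_of_ne {u : {u : V // u ≠ c}} (hu : u.1 ≠ d) :
    (contractPairEquiv hcd u).1 = u.1 := by
  simp [contractPairEquiv, Equiv.swap_apply_of_ne_of_ne u.2 hu]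

lemma contractPairEquiv_apply_notMem {u : {u : V // u ≠ c}} (hu : u.1 ≠ d) :
    (contractPairEquiv hcd u).1 ∉ ({c, d} : Set V) := by
  simp [contractPairEquiv_apply_val_of_ne hcd hu, u.2, hu]

end ContractPairEquiv

section CliqueElimination

variable {V : Type*} {G : SimpleGraph V} {c d : V} {K : Set V}

lemma adj_iff_mem_of_neighborSet_eq_insert (hN : G.neighborSet c = insert d K) {x : V}
    (hx : x ≠ d) : G.Adj c x ↔ x ∈ K := by
  rw [← mem_neighborSet, hN, Set.mem_insert_iff, or_iff_right hx]

lemma adj_of_neighborSet_eq_insert (hN : G.neighborSet c = insert d K) : G.Adj c d :=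
  (hN.symm ▸ Set.mem_insert d K : d ∈ G.neighborSet c)

lemma localComp_adj_iff_deleteEdges_adj (hN : G.neighborSet c = insert d K)
    (hK : G.IsClique K) {a b : V} (had : a ≠ d) (hbd : b ≠ d) :
    (localComp G c).Adj a b ↔ (G.deleteEdges K.sym2).Adj a b := by
  have hcK : ∀ {x}, x ≠ d → (G.Adj c x ↔ x ∈ K) := adj_iff_mem_of_neighborSet_eq_insert hN
  rw [deleteEdges_adj, Set.mk_mem_sym2_iff]
  by_cases haK : a ∈ K
  · by_cases hbK : b ∈ K
    · rw [localComp_adj_of_adj_of_adj ((hcK had).2 haK) ((hcK hbd).2 hbK)]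
      have := hK haK hbK
      tauto
    · rw [adj_comm, localComp_adj_of_not_adj_left (mt (hcK hbd).1 hbK), adj_comm]
      tauto
  · rw [localComp_adj_of_not_adj_left (mt (hcK had).1 haK)]
    tauto

lemma localComp_adj_iff_exists_deleteEdges_adj (hN : G.neighborSet c = insert d K)
    (hdK : ∀ w ∈ K, ¬ G.Adj d w) {b : V} (hbd : b ≠ d) :
    (localComp G c).Adj d b ↔ ∃ s ∈ ({c, d} : Set V), (G.deleteEdges K.sym2).Adj s b := by
  have hcd := adj_of_neighborSet_eq_insert hN
  have hcK : c ∉ K := fun h =>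
    G.irrefl (hN.symm ▸ Set.mem_insert_of_mem d h : c ∈ G.neighborSet c)
  have hcb := adj_iff_mem_of_neighborSet_eq_insert hN hbd
  simp only [Set.mem_insert_iff, Set.mem_singleton_iff, exists_eq_or_imp, exists_eq_left,
    deleteEdges_adj, Set.mk_mem_sym2_iff]
  by_cases hbK : b ∈ K
  · rw [localComp_adj_of_adj_of_adj hcd (hcb.2 hbK)]
    have := hdK b hbK
    tauto
  · rw [adj_comm, localComp_adj_of_not_adj_left (mt hcb.1 hbK), adj_comm]
    tauto

lemma contractSet_adj_contractPairEquiv [DecidableEq V] (hN : G.neighborSet c = insert d K)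
    (hK : G.IsClique K) (hdK : ∀ w ∈ K, ¬ G.Adj d w) (hcd : c ≠ d) (u v : {u : V // u ≠ c}) :
    (contractSet (G.deleteEdges K.sym2) {c, d} c).Adj
        (contractPairEquiv hcd u) (contractPairEquiv hcd v) ↔
      (localComp G c).Adj u v := by
  have hcS : c ∈ ({c, d} : Set V) := .inl rfl
  have contracted_left : ∀ u v : {u : V // u ≠ c}, u.1 = d → v.1 ≠ d →
      ((contractSet (G.deleteEdges K.sym2) {c, d} c).Adj
        (contractPairEquiv hcd u) (contractPairEquiv hcd v) ↔ (localComp G c).Adj u v) := by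
    intro u v hu hv
    rw [contractPairEquiv_apply_of_eq hcd hu,
      contractSet_adj_contracted_left hcS (contractPairEquiv_apply_notMem hcd hv),
      contractPairEquiv_apply_val_of_ne hcd hv, hu,
      localComp_adj_iff_exists_deleteEdges_adj hN hdK hv]
  by_cases hu : u.1 = d <;> by_cases hv : v.1 = d
  · obtain rfl : u = v := Subtype.ext (hu.trans hv.symm)
    exact iff_of_false (SimpleGraph.irrefl _) (SimpleGraph.irrefl _)
  · exact contracted_left u v hu hv
  · rw [adj_comm, (localComp G c).adj_comm]
    exact contracted_left v u hv hu
  · rw [contractSet_adj_of_notMem hcS (contractPairEquiv_apply_notMem hcd hu)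
      (contractPairEquiv_apply_notMem hcd hv), contractPairEquiv_apply_val_of_ne hcd hu,
      contractPairEquiv_apply_val_of_ne hcd hv, localComp_adj_iff_deleteEdges_adj hN hK hu hv]

theorem hasVertexMinor_contractSet_deleteEdges [Finite V] (hN : G.neighborSet c = insert d K)
    (hK : G.IsClique K) (hdK : ∀ w ∈ K, ¬ G.Adj d w) :
    HasVertexMinor G (contractSet (G.deleteEdges K.sym2) {c, d} c) := by
  classical
  have hcd : c ≠ d := (adj_of_neighborSet_eq_insert hN).ne
  exact (hasVertexMinor_localComp G c).trans <| (hasVertexMinor_induce_ne _ c).trans <|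
    hasVertexMinor_of_iso
      ⟨contractPairEquiv hcd, contractSet_adj_contractPairEquiv hN hK hdK hcd _ _⟩

end CliqueElimination

lemma neighborSet_eq_insert_sdiff_of_ncard_eq {V : Type*} {G : SimpleGraph V} {C : Finset V}
    {c d : V} (hC : G.IsClique (C : Set V)) (hc : c ∈ C) (hd : d ∉ C) (hcd : G.Adj c d)
    (hdeg : (G.neighborSet c).ncard = C.card) :
    G.neighborSet c = insert d (↑C \ {c}) := by
  have hsub : insert d (↑C \ {c}) ⊆ G.neighborSet c :=
    Set.insert_subset hcd fun x hx => hC (Finset.mem_coe.2 hc) hx.1 (Ne.symm hx.2)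
  refine (Set.eq_of_subset_of_ncard_le hsub ?_
    (Set.finite_of_ncard_pos (hdeg ▸ Finset.card_pos.2 ⟨c, hc⟩))).symm
  rw [hdeg, Set.ncard_insert_of_notMem (fun h => hd h.1), Set.ncard_sdiff_singleton_of_mem hc,
    Set.ncard_coe_finset, Nat.sub_add_cancel (Finset.card_pos.2 ⟨c, hc⟩)]

lemma sym2_sdiff_singleton_eq_setOf {α : Type*} (s : Set α) (c : α) :
    (s \ {c}).sym2 = {e | ∃ u ∈ s, ∃ v ∈ s, u ≠ c ∧ v ≠ c ∧ e = s(u, v)} := by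
  ext e
  induction e using Sym2.ind with | h x y => ?_
  simp only [Set.mem_ofPred_eq, Set.mk_mem_sym2_iff, Sym2.eq_iff, Set.mem_sdiff,
    Set.mem_singleton_iff]
  constructor
  · rintro ⟨⟨hx, hxc⟩, hy, hyc⟩
    exact ⟨x, hx, y, hy, hxc, hyc, .inl ⟨rfl, rfl⟩⟩
  · rintro ⟨u, hu, v, hv, huc, hvc, ⟨rfl, rfl⟩ | ⟨rfl, rfl⟩⟩
    exacts [⟨⟨hu, huc⟩, hv, hvc⟩, ⟨⟨hv, hvc⟩, hu, huc⟩]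

/-- **Lemma 4.1.** If `c` is a degree-`k` vertex of a big `k`-clique `C` whose unique
neighbour `d` outside `C` is adjacent to no other vertex of `C`, then
`(G − E(C − c))/cd` is a vertex-minor of `G`. -/
theorem eliminate_big_clique (V : Type) [Fintype V] (G : SimpleGraph V)
    (C : Finset V) (c d : V)
    (hC : IsBigClique G C) (hc : c ∈ C)
    (hdeg : (G.neighborSet c).ncard = C.card)
    (hd : d ∉ C) (hcd : G.Adj c d)
    (hdC : ∀ w ∈ C, w ≠ c → ¬ G.Adj d w) :
    HasVertexMinor G
      (contractSet
        (G.deleteEdges {e | ∃ u ∈ C, ∃ v ∈ C, u ≠ c ∧ v ≠ c ∧ e = s(u, v)})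
        {c, d} c) := by
  have h := hasVertexMinor_contractSet_deleteEdges
    (neighborSet_eq_insert_sdiff_of_ncard_eq hC.1 hc hd hcd hdeg)
    (hC.1.subset Set.sdiff_subset) fun w hw => hdC w hw.1 hw.2
  rwa [sym2_sdiff_singleton_eq_setOf] at h
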